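/- Let G be a finite tree of order n₁ ≥ 2 with l(G) leaves, and let H be a finite connected nontrivial simple graph of order n₂. Then dim_s(G ⊠ H) = n₂(l(G) − 1) + n₁ · dim_s(H) − (l(G) − 1) · dim_s(H). -/

import Mathlib

open SimpleGraph Finset

variable {α β : Type*}

/-- The strong product of two simple graphs: distinct vertices `(a,b)` and `(c,d)` are adjacent
iff (`a = c` or `a ~ c`) and (`b = d` or `b ~ d`). -/
def strongProd (G : SimpleGraph α) (H : SimpleGraph β) : SimpleGraph (α × β) where
  Adj x y := x ≠ y ∧ (x.1 = y.1 ∨ G.Adj x.1 y.1) ∧ (x.2 = y.2 ∨ H.Adj x.2 y.2)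
  symm := by
    constructor
    rintro x y ⟨h1, h2, h3⟩
    exact ⟨h1.symm, h2.imp Eq.symm (fun a => a.symm), h3.imp Eq.symm (fun a => a.symm)⟩
  loopless := ⟨fun x h => h.1 rfl⟩

/-- The Cartesian sum (disjunctive product) of two simple graphs. -/
def cartSum (G : SimpleGraph α) (H : SimpleGraph β) : SimpleGraph (α × β) where
  Adj x y := x ≠ y ∧ (G.Adj x.1 y.1 ∨ H.Adj x.2 y.2)
  symm := by
    constructor
    rintro x y ⟨h1, h2⟩
    exact ⟨h1.symm, h2.imp (fun a => a.symm) (fun a => a.symm)⟩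
  loopless := ⟨fun x h => h.1 rfl⟩

/-- `u` is maximally distant from `v` in `G`. -/
def MaximallyDistantFrom (G : SimpleGraph α) (u v : α) : Prop :=
  ∀ w, G.Adj u w → G.dist v w ≤ G.dist u v

/-- `u` and `v` are mutually maximally distant in `G`. -/
def MutuallyMaximallyDistant (G : SimpleGraph α) (u v : α) : Prop :=
  MaximallyDistantFrom G u v ∧ MaximallyDistantFrom G v u

/-- The strong resolving graph of `G`. -/
def strongResolvingGraph (G : SimpleGraph α) : SimpleGraph α where
  Adj u v := u ≠ v ∧ MutuallyMaximallyDistant G u v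
  symm := by constructor; rintro u v ⟨h1, h2, h3⟩; exact ⟨h1.symm, h3, h2⟩
  loopless := ⟨fun x h => h.1 rfl⟩

/-- A finset of vertices is independent if no two of its (distinct) members are adjacent. -/
def IsIndepFinset (G : SimpleGraph α) (s : Finset α) : Prop :=
  ∀ u ∈ s, ∀ v ∈ s, u ≠ v → ¬ G.Adj u v

/-- The independence number `β(G)`. -/
noncomputable def indepNum (G : SimpleGraph α) [Fintype α] : ℕ :=
  sSup {n | ∃ s : Finset α, IsIndepFinset G s ∧ s.card = n}

/-- `w` strongly resolves `u` and `v` in `G`. -/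
def StronglyResolves (G : SimpleGraph α) (w u v : α) : Prop :=
  G.dist w u = G.dist w v + G.dist v u ∨ G.dist w v = G.dist w u + G.dist u v

/-- A strong metric generator for `G`. -/
def IsStrongMetricGenerator (G : SimpleGraph α) (s : Finset α) : Prop :=
  ∀ u v : α, u ≠ v → ∃ w ∈ s, StronglyResolves G w u v

/-- The strong metric dimension of `G`. -/
noncomputable def sdim (G : SimpleGraph α) [Fintype α] : ℕ :=
  sInf {n | ∃ s : Finset α, IsStrongMetricGenerator G s ∧ s.card = n}

/-!
For connected `G`, a set strongly resolves `G` exactly when it covers every edge of the strong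
resolving graph `G_SR`, so `sdim G + β(G_SR) = |V(G)|`: a mutually maximally distant pair is
resolved only by its own ends, and every pair is resolved by both ends of some mutually maximally
distant pair.

Distances in `T ⊠ H` are maxima of the coordinate distances. If `a` is not a leaf of the tree `T`,
it has a neighbour farther from `c`, so `(a, b)` and `(c, d)` can only be mutually maximally distant
when `b, d` are, and are farther apart than `a, c`; distinct leaves, on the other hand, are mutually
maximally distant, and so behave like one vertex. Hence
`β((T ⊠ H)_SR) = (n₁ - l + 1) β(H_SR)`, and the formula follows.
-/

section Metric

variable {G : SimpleGraph α}

lemma dist_le_dist_add_one_of_adj {u w : α} (h : G.Adj u w) (v : α) :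
    G.dist v w ≤ G.dist v u + 1 := by
  simpa [dist_eq_one_iff_adj.mpr h] using h.reachable.dist_triangle_right v

theorem SimpleGraph.Reachable.exists_adj_dist_lt {v w : α} (h : G.Reachable v w) (hne : v ≠ w) :
    ∃ v', G.Adj v v' ∧ G.dist v' w < G.dist v w := by
  obtain ⟨p, hp⟩ := h.exists_walk_length_eq_dist
  cases p with
  | nil => exact absurd rfl hne
  | cons hadj q =>
    refine ⟨_, hadj, (dist_le q).trans_lt ?_⟩
    rw [← hp, Walk.length_cons]
    omega

lemma maximallyDistantFrom_of_degree_eq_one (hG : G.Connected) {a c : α}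
    [Fintype (G.neighborSet a)] (ha : G.degree a = 1) (hac : a ≠ c) :
    MaximallyDistantFrom G a c := by
  obtain ⟨a₀, ha₀, hlt⟩ := (hG a c).exists_adj_dist_lt hac
  obtain ⟨_, -, huniq⟩ := degree_eq_one_iff_existsUnique_adj.mp ha
  intro a' ha'
  rw [huniq a' ha', ← huniq a₀ ha₀, dist_comm]
  exact hlt.le

lemma MaximallyDistantFrom.eq_of_dist_eq_add (hG : G.Connected) {u v w : α}
    (h : MaximallyDistantFrom G v u) (hw : G.dist w u = G.dist w v + G.dist v u) : w = v := by
  by_contra hne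
  obtain ⟨v', hv', hlt⟩ := (hG v w).exists_adj_dist_lt (Ne.symm hne)
  have hmax := h v' hv'
  have htri := hG.dist_triangle (u := w) (v := v') (w := u)
  have c₁ : G.dist v' w = G.dist w v' := dist_comm
  have c₂ : G.dist v w = G.dist w v := dist_comm
  have c₃ : G.dist v' u = G.dist u v' := dist_comm
  omega

lemma MutuallyMaximallyDistant.eq_or_eq_of_stronglyResolves (hG : G.Connected) {u v w : α}
    (h : MutuallyMaximallyDistant G u v) (hw : StronglyResolves G w u v) : w = u ∨ w = v :=
  hw.symm.imp (h.1.eq_of_dist_eq_add hG) (h.2.eq_of_dist_eq_add hG)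

lemma MaximallyDistantFrom.of_dist_eq_add (hG : G.Connected) {u v w : α}
    (h : MaximallyDistantFrom G u v) (hw : G.dist w u = G.dist w v + G.dist v u) :
    MaximallyDistantFrom G u w := by
  intro x hx
  have hmax := h x hx
  have htri := hG.dist_triangle (u := w) (v := v) (w := x)
  rw [dist_comm (u := u) (v := w)]
  rw [dist_comm (u := v) (v := u)] at hw
  omega

lemma exists_maximallyDistantFrom_dist_eq_add [Fintype α] (hG : G.Connected) (v u : α) :
    ∃ u', MaximallyDistantFrom G u' v ∧ G.dist v u' = G.dist v u + G.dist u u' := by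
  classical
  obtain ⟨u', hu', hmax⟩ :=
    (univ.filter fun x => G.dist v x = G.dist v u + G.dist u x).exists_max_image (G.dist v)
      ⟨u, by simp⟩
  rw [mem_filter] at hu'
  refine ⟨u', fun w hw => ?_, hu'.2⟩
  by_contra! hlt
  have h₁ := dist_le_dist_add_one_of_adj hw v
  have h₂ := dist_le_dist_add_one_of_adj hw u
  have h₃ := hG.dist_triangle (u := v) (v := u) (w := w)
  rw [dist_comm] at hlt
  have := hmax w (by rw [mem_filter]; exact ⟨mem_univ w, by omega⟩)
  omega

lemma IsStrongMetricGenerator.isIndepFinset_compl [Fintype α] [DecidableEq α]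
    (hG : G.Connected) {s : Finset α} (hs : IsStrongMetricGenerator G s) :
    IsIndepFinset (strongResolvingGraph G) sᶜ := by
  rintro u hu v hv huv ⟨-, hmmd⟩
  obtain ⟨w, hws, hw⟩ := hs u v huv
  rcases hmmd.eq_or_eq_of_stronglyResolves hG hw with rfl | rfl
  · exact mem_compl.mp hu hws
  · exact mem_compl.mp hv hws

/-- Extending a geodesic `v → u` beyond `u`, and then the geodesic `u' → v` beyond `v`, yields
two mutually maximally distant vertices `u'` and `v'`, each of which strongly resolves `u` and
`v`. -/
lemma IsIndepFinset.isStrongMetricGenerator_compl [Fintype α] [DecidableEq α]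
    (hG : G.Connected) {I : Finset α} (hI : IsIndepFinset (strongResolvingGraph G) I) :
    IsStrongMetricGenerator G Iᶜ := by
  intro u v huv
  obtain ⟨u', hu'v, hu'⟩ := exists_maximallyDistantFrom_dist_eq_add hG v u
  obtain ⟨v', hv'u', hv'⟩ := exists_maximallyDistantFrom_dist_eq_add hG u' v
  have hpos := hG.pos_dist_of_ne huv
  have c₁ : G.dist v' u' = G.dist u' v' := dist_comm
  have c₂ : G.dist v' v = G.dist v v' := dist_comm
  have c₃ : G.dist v u' = G.dist u' v := dist_comm
  have c₄ : G.dist v u = G.dist u v := dist_comm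
  have hu'v' : MaximallyDistantFrom G u' v' := hu'v.of_dist_eq_add hG (by omega)
  have hne : u' ≠ v' := by
    rintro rfl
    rw [dist_self] at hv'
    omega
  by_cases hu'I : u' ∈ I
  · have hv'I : v' ∉ I := fun h => hI u' hu'I v' h hne ⟨hne, hu'v', hv'u'⟩
    refine ⟨v', mem_compl.mpr hv'I, Or.inl ?_⟩
    have h₁ := hG.dist_triangle (u := v') (v := u) (w := u')
    have h₂ := hG.dist_triangle (u := v') (v := v) (w := u)
    omega
  · refine ⟨u', mem_compl.mpr hu'I, Or.inr ?_⟩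
    have : G.dist u' u = G.dist u u' := dist_comm
    omega

end Metric

section Invariants

variable {G : SimpleGraph α} [Fintype α]

lemma bddAbove_card_isIndepFinset (G : SimpleGraph α) :
    BddAbove {n | ∃ s : Finset α, IsIndepFinset G s ∧ #s = n} :=
  ⟨Fintype.card α, by rintro n ⟨t, -, rfl⟩; exact t.card_le_univ⟩

lemma IsIndepFinset.card_le_indepNum {s : Finset α} (h : IsIndepFinset G s) :
    #s ≤ _root_.indepNum G :=
  le_csSup (bddAbove_card_isIndepFinset G) ⟨s, h, rfl⟩

lemma indepNum_le_of_forall_isIndepFinset {n : ℕ} (h : ∀ s, IsIndepFinset G s → #s ≤ n) :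
    _root_.indepNum G ≤ n := by
  unfold _root_.indepNum
  exact csSup_le ⟨0, ∅, by simp [IsIndepFinset], rfl⟩
    (by rintro _ ⟨s, hs, rfl⟩; exact h s hs)

lemma exists_isIndepFinset_card_eq_indepNum (G : SimpleGraph α) :
    ∃ s, IsIndepFinset G s ∧ #s = _root_.indepNum G :=
  Nat.sSup_mem (s := {n | ∃ s : Finset α, IsIndepFinset G s ∧ #s = n})
    ⟨0, ∅, by simp [IsIndepFinset], rfl⟩ (bddAbove_card_isIndepFinset G)

lemma IsStrongMetricGenerator.sdim_le {s : Finset α} (h : IsStrongMetricGenerator G s) :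
    sdim G ≤ #s :=
  Nat.sInf_le ⟨s, h, rfl⟩

lemma exists_isStrongMetricGenerator_card_eq_sdim (G : SimpleGraph α) :
    ∃ s, IsStrongMetricGenerator G s ∧ #s = sdim G :=
  Nat.sInf_mem (s := {n | ∃ s : Finset α, IsStrongMetricGenerator G s ∧ #s = n})
    ⟨_, univ, fun u _ _ => ⟨u, mem_univ u, Or.inr (by simp)⟩, rfl⟩

theorem sdim_add_indepNum (hG : G.Connected) :
    sdim G + _root_.indepNum (strongResolvingGraph G) = Fintype.card α := by
  classical
  obtain ⟨s, hs, hs_card⟩ := exists_isStrongMetricGenerator_card_eq_sdim G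
  obtain ⟨I, hI, hI_card⟩ := exists_isIndepFinset_card_eq_indepNum (strongResolvingGraph G)
  have h₁ := (hs.isIndepFinset_compl hG).card_le_indepNum
  have h₂ := (hI.isStrongMetricGenerator_compl hG).sdim_le
  rw [card_compl] at h₁ h₂
  have := s.card_le_univ
  have := I.card_le_univ
  omega

end Invariants

section StrongProduct

variable {γ : Type*} {G : SimpleGraph α} {H : SimpleGraph β}

def strongProdHomLeft (H : SimpleGraph β) (b : β) : G →g strongProd G H where
  toFun a := (a, b)
  map_rel' h := ⟨fun e => h.ne (congrArg Prod.fst e), Or.inr h, Or.inl rfl⟩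

def strongProdHomRight (G : SimpleGraph α) (a : α) : H →g strongProd G H where
  toFun b := (a, b)
  map_rel' h := ⟨fun e => h.ne (congrArg Prod.snd e), Or.inl rfl, Or.inr h⟩

lemma exists_walk_strongProd_length_eq_max {a c : α} {b d : β} (p : G.Walk a c)
    (q : H.Walk b d) :
    ∃ r : (strongProd G H).Walk (a, b) (c, d), r.length = max p.length q.length := by
  induction p generalizing b d with
  | nil => exact ⟨q.map (strongProdHomRight G _), (Walk.length_map _ _).trans (by simp)⟩
  | cons h p ih =>
    cases q with
    | nil =>
      exact ⟨(Walk.cons h p).map (strongProdHomLeft H _), (Walk.length_map _ _).trans (by simp)⟩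
    | cons h' q =>
      obtain ⟨r, hr⟩ := ih q
      refine ⟨Walk.cons ⟨fun e => h.ne (congrArg Prod.fst e), Or.inr h, Or.inr h'⟩ r, ?_⟩
      change r.length + 1 = _
      simp only [Walk.length_cons, hr]
      omega

theorem SimpleGraph.Connected.strongProd (hG : G.Connected) (hH : H.Connected) :
    (_root_.strongProd G H).Connected := by
  have : Nonempty (α × β) := ⟨(hG.nonempty.some, hH.nonempty.some)⟩
  exact ⟨fun x y => ⟨(exists_walk_strongProd_length_eq_max (hG x.1 y.1).some
    (hH x.2 y.2).some).choose⟩⟩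

lemma dist_le_dist_of_forall_adj {G' : SimpleGraph γ} (f : α → γ)
    (hf : ∀ x y, G.Adj x y → f x = f y ∨ G'.Adj (f x) (f y)) {u v : α}
    (h : G.Reachable u v) :
    G'.dist (f u) (f v) ≤ G.dist u v := by
  suffices ∀ {u v : α} (p : G.Walk u v), ∃ q : G'.Walk (f u) (f v), q.length ≤ p.length by
    obtain ⟨p, hp⟩ := h.exists_walk_length_eq_dist
    obtain ⟨q, hq⟩ := this p
    exact (dist_le q).trans (hq.trans hp.le)
  intro u v p
  induction p with
  | nil => exact ⟨Walk.nil, le_rfl⟩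
  | cons h p ih =>
    obtain ⟨q, hq⟩ := ih
    rcases hf _ _ h with e | h'
    · exact ⟨q.copy e.symm rfl, by simp only [Walk.length_copy, Walk.length_cons]; omega⟩
    · exact ⟨Walk.cons h' q, by simp only [Walk.length_cons]; omega⟩

lemma dist_strongProd (hG : G.Connected) (hH : H.Connected) (a c : α) (b d : β) :
    (strongProd G H).dist (a, b) (c, d) = max (G.dist a c) (H.dist b d) := by
  apply le_antisymm
  · obtain ⟨p, hp⟩ := (hG a c).exists_walk_length_eq_dist
    obtain ⟨q, hq⟩ := (hH b d).exists_walk_length_eq_dist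
    obtain ⟨r, hr⟩ := exists_walk_strongProd_length_eq_max p q
    exact (dist_le r).trans (by rw [hr, hp, hq])
  · have hr := hG.strongProd hH (a, b) (c, d)
    exact max_le
      (dist_le_dist_of_forall_adj (G := strongProd G H) Prod.fst (fun _ _ h => h.2.1) hr)
      (dist_le_dist_of_forall_adj (G := strongProd G H) Prod.snd (fun _ _ h => h.2.2) hr)

lemma maximallyDistantFrom_strongProd_iff (hG : G.Connected) (hH : H.Connected) {a c : α}
    {b d : β} :
    MaximallyDistantFrom (strongProd G H) (a, b) (c, d) ↔
      (∀ a', G.Adj a a' → G.dist c a' ≤ max (G.dist c a) (H.dist d b)) ∧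
      (∀ b', H.Adj b b' → H.dist d b' ≤ max (G.dist c a) (H.dist d b)) := by
  have hdist : ∀ (a' : α) (b' : β), (strongProd G H).dist (c, d) (a', b') =
      max (G.dist c a') (H.dist d b') := fun a' b' => dist_strongProd hG hH c a' d b'
  simp only [MaximallyDistantFrom, dist_comm (u := (a, b)), Prod.forall, hdist]
  constructor
  · refine fun h => ⟨fun a' ha' => ?_, fun b' hb' => ?_⟩
    · exact (le_max_left _ _).trans (h a' b ⟨by simp [ha'.ne], Or.inr ha', Or.inl rfl⟩)
    · exact (le_max_right _ _).trans (h a b' ⟨by simp [hb'.ne], Or.inl rfl, Or.inr hb'⟩)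
  · rintro ⟨hA, hB⟩ a' b' ⟨-, ha', hb'⟩
    refine max_le ?_ ?_
    · rcases ha' with rfl | ha'
      · exact le_max_left _ _
      · exact hA a' ha'
    · rcases hb' with rfl | hb'
      · exact le_max_right _ _
      · exact hB b' hb'

lemma maximallyDistantFrom_strongProd (hG : G.Connected) (hH : H.Connected) {a c : α}
    {b d : β} (h₁ : MaximallyDistantFrom G a c ∨ G.dist c a < H.dist d b)
    (h₂ : MaximallyDistantFrom H b d ∨ H.dist d b < G.dist c a) :
    MaximallyDistantFrom (strongProd G H) (a, b) (c, d) := by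
  rw [maximallyDistantFrom_strongProd_iff hG hH]
  constructor
  · intro a' ha'
    rcases h₁ with h | h
    · exact (h a' ha').trans (dist_comm.trans_le (le_max_left _ _))
    · have := dist_le_dist_add_one_of_adj ha' c
      omega
  · intro b' hb'
    rcases h₂ with h | h
    · exact (h b' hb').trans (dist_comm.trans_le (le_max_right _ _))
    · have := dist_le_dist_add_one_of_adj hb' d
      omega

lemma MaximallyDistantFrom.of_strongProd (hG : G.Connected) (hH : H.Connected) {a c : α}
    {b d : β} (h : MaximallyDistantFrom (strongProd G H) (a, b) (c, d))
    (hlt : G.dist c a < H.dist d b) : MaximallyDistantFrom H b d := by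
  intro b' hb'
  have := ((maximallyDistantFrom_strongProd_iff hG hH).mp h).2 b' hb'
  rw [dist_comm (u := b)]
  omega

lemma strongResolvingGraph_strongProd_adj_of_fst_eq (hG : G.Connected) (hH : H.Connected)
    (a : α) {b d : β} (h : (strongResolvingGraph H).Adj b d) :
    (strongResolvingGraph (strongProd G H)).Adj (a, b) (a, d) := by
  have hpos : ∀ {b d : β}, b ≠ d → G.dist a a < H.dist d b := fun hbd => by
    rw [dist_self]
    exact hH.pos_dist_of_ne hbd.symm
  obtain ⟨hbd, hbd₁, hbd₂⟩ := h
  exact ⟨by simp [hbd], maximallyDistantFrom_strongProd hG hH (.inr (hpos hbd)) (.inl hbd₁),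
    maximallyDistantFrom_strongProd hG hH (.inr (hpos hbd.symm)) (.inl hbd₂)⟩

lemma strongResolvingGraph_strongProd_adj_of_degree_eq_one (hG : G.Connected)
    (hH : H.Connected) {a c : α} [Fintype (G.neighborSet a)] [Fintype (G.neighborSet c)]
    {b d : β} (hac : a ≠ c) (ha : G.degree a = 1) (hc : G.degree c = 1)
    (hbd : b = d ∨ (strongResolvingGraph H).Adj b d) :
    (strongResolvingGraph (strongProd G H)).Adj (a, b) (c, d) := by
  refine ⟨by simp [hac], maximallyDistantFrom_strongProd hG hH
    (.inl (maximallyDistantFrom_of_degree_eq_one hG ha hac)) ?_,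
    maximallyDistantFrom_strongProd hG hH
    (.inl (maximallyDistantFrom_of_degree_eq_one hG hc hac.symm)) ?_⟩
  · refine hbd.symm.imp (fun h => h.2.1) ?_
    rintro rfl
    rw [dist_self]
    exact hG.pos_dist_of_ne hac.symm
  · refine hbd.symm.imp (fun h => h.2.2) ?_
    rintro rfl
    rw [dist_self]
    exact hG.pos_dist_of_ne hac

end StrongProduct

section Tree

variable {G : SimpleGraph α} {H : SimpleGraph β}

theorem SimpleGraph.IsAcyclic.dist_eq_add_one_of_adj (hG : G.IsAcyclic) {c a a' : α}
    {p : G.Walk c a} (hp : p.IsPath) (hpl : p.length = G.dist c a) (hadj : G.Adj a a')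
    (hne : a' ≠ p.penultimate) : G.dist c a' = G.dist c a + 1 := by
  obtain ⟨q, hq, hql⟩ := (p.concat hadj).reachable.exists_path_of_dist
  by_cases ha : a ∈ q.support
  · rw [← hql, hG.path_concat hp hq hadj ha, Walk.length_concat, hpl]
  · exact absurd (hG.eq_penultimate_of_adj_end hp hadj
      (hG.mem_support_of_ne_mem_support_of_adj_of_isPath hp hq hadj ha)) hne

theorem SimpleGraph.IsTree.exists_adj_dist_eq_add_one (hT : G.IsTree) {a : α}
    [Fintype (G.neighborSet a)] (ha : 2 ≤ G.degree a) (c : α) :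
    ∃ a', G.Adj a a' ∧ G.dist c a' = G.dist c a + 1 := by
  obtain ⟨p, hp, hpl⟩ := (hT.connected c a).exists_path_of_dist
  obtain ⟨a', ha', hne⟩ := (G.neighborFinset a).exists_mem_ne
    (by rw [card_neighborFinset_eq_degree]; omega) p.penultimate
  rw [mem_neighborFinset] at ha'
  exact ⟨a', ha', hT.isAcyclic.dist_eq_add_one_of_adj hp hpl ha' hne⟩

theorem SimpleGraph.IsTree.dist_lt_of_maximallyDistantFrom_strongProd (hT : G.IsTree)
    (hH : H.Connected) {a c : α} [Fintype (G.neighborSet a)] {b d : β} (ha : 2 ≤ G.degree a)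
    (h : MaximallyDistantFrom (strongProd G H) (a, b) (c, d)) : G.dist c a < H.dist d b := by
  obtain ⟨a', ha', hfar⟩ := hT.exists_adj_dist_eq_add_one ha c
  have := ((maximallyDistantFrom_strongProd_iff hT.connected hH).mp h).1 a' ha'
  omega

end Tree

section IndependenceNumber

variable {G : SimpleGraph α} {H : SimpleGraph β} [Fintype β]

lemma card_filter_fst_le_indepNum {A : Finset (α × β)}
    (hA : IsIndepFinset (strongResolvingGraph (strongProd G H)) A) (p : α → Prop)
    [DecidablePred p]
    (hp : ∀ ⦃a c b d⦄, p a → p c → (a, b) ≠ (c, d) →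
      (b = d ∨ (strongResolvingGraph H).Adj b d) →
      (strongResolvingGraph (strongProd G H)).Adj (a, b) (c, d)) :
    #(A.filter fun x => p x.1) ≤ _root_.indepNum (strongResolvingGraph H) := by
  classical
  have hsep : ∀ x ∈ A.filter (fun x => p x.1), ∀ y ∈ A.filter (fun x => p x.1), x ≠ y →
      ¬ (x.2 = y.2 ∨ (strongResolvingGraph H).Adj x.2 y.2) := by
    intro x hx y hy hxy hbd
    rw [mem_filter] at hx hy
    exact hA x hx.1 y hy.1 hxy (hp hx.2 hy.2 hxy hbd)
  have hinj : Set.InjOn Prod.snd (A.filter fun x => p x.1 : Set (α × β)) :=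
    fun x hx y hy he => by_contra fun hxy => hsep x hx y hy hxy (.inl he)
  rw [← card_image_of_injOn hinj]
  apply IsIndepFinset.card_le_indepNum
  intro b hb d hd hbd hadj
  obtain ⟨x, hx, rfl⟩ := mem_image.mp hb
  obtain ⟨y, hy, rfl⟩ := mem_image.mp hd
  exact hsep x hx y hy (fun e => hbd (congrArg Prod.snd e)) (.inr hadj)

variable [Fintype α] [DecidableRel G.Adj]

lemma indepNum_strongResolvingGraph_strongProd_le (hG : G.Connected) (hH : H.Connected) :
    _root_.indepNum (strongResolvingGraph (strongProd G H)) ≤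
      (#(univ.filter fun v => G.degree v ≠ 1) + 1) *
        _root_.indepNum (strongResolvingGraph H) := by
  classical
  refine indepNum_le_of_forall_isIndepFinset fun A hA => ?_
  have hfibre : ∀ a b d, (a, b) ≠ (a, d) → (b = d ∨ (strongResolvingGraph H).Adj b d) →
      (strongResolvingGraph (strongProd G H)).Adj (a, b) (a, d) := fun a b d hne hbd =>
    strongResolvingGraph_strongProd_adj_of_fst_eq hG hH a
      (hbd.resolve_left fun e => hne (by rw [e]))
  have hleaves : #(A.filter fun x => G.degree x.1 = 1) ≤
      _root_.indepNum (strongResolvingGraph H) := by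
    refine card_filter_fst_le_indepNum hA (G.degree · = 1) fun a c b d ha hc hne hbd => ?_
    obtain rfl | hac := eq_or_ne a c
    · exact hfibre a b d hne hbd
    · exact strongResolvingGraph_strongProd_adj_of_degree_eq_one hG hH hac ha hc hbd
  have hinner : #(A.filter fun x => G.degree x.1 ≠ 1) ≤
      _root_.indepNum (strongResolvingGraph H) * #(univ.filter fun v => G.degree v ≠ 1) := by
    refine card_le_mul_card_image_of_maps_to (f := Prod.fst) (by simp) _ fun a _ => ?_
    refine (card_le_card (filter_subset_filter _ (filter_subset _ A))).trans ?_
    refine card_filter_fst_le_indepNum hA (· = a) fun a' c b d ha' hc hne hbd => ?_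
    subst ha' hc
    exact hfibre _ b d hne hbd
  have hsplit := card_filter_add_card_filter_not (s := A) fun x => G.degree x.1 = 1
  linarith

lemma SimpleGraph.IsTree.le_indepNum_strongResolvingGraph_strongProd [Nontrivial α]
    (hT : G.IsTree) (hH : H.Connected) :
    (#(univ.filter fun v => G.degree v ≠ 1) + 1) * _root_.indepNum (strongResolvingGraph H) ≤
      _root_.indepNum (strongResolvingGraph (strongProd G H)) := by
  classical
  obtain ⟨x₀, hx₀⟩ := hT.exists_vert_degree_one_of_nontrivial
  obtain ⟨I, hI, hI_card⟩ := exists_isIndepFinset_card_eq_indepNum (strongResolvingGraph H)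
  have hdeg : ∀ a, G.degree a ≠ 1 → 2 ≤ G.degree a := fun a ha => by
    have := hT.connected.preconnected.degree_pos_of_nontrivial a
    omega
  have hcard : #(insert x₀ (univ.filter fun v => G.degree v ≠ 1) ×ˢ I) =
      (#(univ.filter fun v => G.degree v ≠ 1) + 1) *
        _root_.indepNum (strongResolvingGraph H) := by
    rw [card_product, card_insert_of_notMem (by simp [hx₀]), hI_card]
  rw [← hcard]
  apply IsIndepFinset.card_le_indepNum
  rintro ⟨a, b⟩ hab ⟨c, d⟩ hcd hne ⟨-, hmax, hmax'⟩
  simp only [mem_product, mem_insert, mem_filter, mem_univ, true_and] at hab hcd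
  have hlt : G.dist c a < H.dist d b := by
    obtain rfl | hac := eq_or_ne a c
    · rw [dist_self]
      exact hH.pos_dist_of_ne fun e => hne (by rw [e])
    rcases hab.1 with rfl | ha
    · rcases hcd.1 with rfl | hc
      · exact absurd rfl hac
      · rw [dist_comm, dist_comm (G := H)]
        exact hT.dist_lt_of_maximallyDistantFrom_strongProd hH (hdeg c hc) hmax'
    · exact hT.dist_lt_of_maximallyDistantFrom_strongProd hH (hdeg a ha) hmax
  have hbd : b ≠ d := by
    rintro rfl
    rw [dist_self] at hlt
    omega
  exact hI b hab.2 d hcd.2 hbd ⟨hbd, hmax.of_strongProd hT.connected hH hlt,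
    hmax'.of_strongProd hT.connected hH (by rwa [dist_comm, dist_comm (G := H)])⟩

theorem SimpleGraph.IsTree.indepNum_strongResolvingGraph_strongProd [Nontrivial α]
    (hT : G.IsTree) (hH : H.Connected) :
    _root_.indepNum (strongResolvingGraph (strongProd G H)) =
      (#(univ.filter fun v => G.degree v ≠ 1) + 1) *
        _root_.indepNum (strongResolvingGraph H) :=
  (indepNum_strongResolvingGraph_strongProd_le hT.connected hH).antisymm
    (hT.le_indepNum_strongResolvingGraph_strongProd hH)

end IndependenceNumber

theorem sdim_strongProd_tree_general [Fintype α] [Fintype β]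
    (G : SimpleGraph α) [DecidableRel G.Adj] (hT : G.IsTree) (hGn : 2 ≤ Fintype.card α)
    (H : SimpleGraph β) (hH : H.Connected) :
    sdim (strongProd G H) =
      Fintype.card β * ((Finset.univ.filter fun v => G.degree v = 1).card - 1) +
        Fintype.card α * sdim H -
        ((Finset.univ.filter fun v => G.degree v = 1).card - 1) * sdim H := by
  have : Nontrivial α := Fintype.one_lt_card_iff_nontrivial.mp hGn
  obtain ⟨x₀, hx₀⟩ := hT.exists_vert_degree_one_of_nontrivial
  have hleaf : 0 < #(univ.filter fun v => G.degree v = 1) :=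
    card_pos.mpr ⟨x₀, by simp [hx₀]⟩
  have hsplit := card_filter_add_card_filter_not (s := univ) fun v => G.degree v = 1
  have hprod := sdim_add_indepNum (hT.connected.strongProd hH)
  have hfactor := sdim_add_indepNum hH
  rw [hT.indepNum_strongResolvingGraph_strongProd hH, Fintype.card_prod] at hprod
  rw [card_univ] at hsplit
  obtain ⟨m, hm⟩ := Nat.exists_eq_add_of_lt hleaf
  rw [hm] at hsplit ⊢
  rw [← hsplit, ← hfactor] at hprod
  rw [← hsplit, ← hfactor, Nat.add_sub_cancel]
  apply Nat.eq_sub_of_add_eq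
  linarith

theorem sdim_strongProd_tree [Fintype α] [Fintype β]
    (G : SimpleGraph α) [DecidableRel G.Adj] (hT : G.IsTree) (hGn : 2 ≤ Fintype.card α)
    (H : SimpleGraph β) (hH : H.Connected) (hHn : Nontrivial β) :
    sdim (strongProd G H) =
      Fintype.card β * ((Finset.univ.filter fun v => G.degree v = 1).card - 1) +
        Fintype.card α * sdim H -
        ((Finset.univ.filter fun v => G.degree v = 1).card - 1) * sdim H :=
  sdim_strongProd_tree_general G hT hGn H hH
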